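/- The diameter of a product of stochastic matrices is at most the product of their diameters: for stochastic matrices P (n×m) and Q (m×k), d⁺(PQ) ≤ d⁺(P) d⁺(Q). -/

import Mathlib

/-!
Write `v = p - q` for two rows of `P`, so `∑ v = 0`. Choosing signs `s k` with
`|(vQ) k| = s k * (vQ) k` turns `‖vQ‖₁` into `∑ j, v j * f j` with `f j = ∑ k, s k * Q j k`.
Any two values of `f` differ by at most `‖Q i - Q j‖₁ ≤ 2 d⁺(Q)`, and since `∑ v = 0` we may
centre `f` at the midpoint of its range, which gives `‖vQ‖₁ ≤ ‖v‖₁ d⁺(Q)`.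
-/

open Finset

/-- Total variation distance between two functions viewed as pmfs on a finite set. -/
noncomputable def tv {X : Type*} [Fintype X] (p q : X → ℝ) : ℝ :=
  (1/2) * ∑ x, |p x - q x|

/-- `p` is a probability mass function on a finite set. -/
def IsPmf {X : Type*} [Fintype X] (p : X → ℝ) : Prop :=
  (∀ x, 0 ≤ p x) ∧ ∑ x, p x = 1

/-- The (upper) diameter of a stochastic matrix: the largest total variation
distance between any two of its rows. -/
noncomputable def diam {I X : Type*} [Fintype I] [Fintype X] (P : I → X → ℝ) : ℝ :=
  ⨆ i : I, ⨆ j : I, tv (P i) (P j)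

lemma tv_nonneg {X : Type*} [Fintype X] (p q : X → ℝ) : 0 ≤ tv p q := by
  unfold tv
  positivity

section diam

variable {I X : Type*} [Fintype I] [Fintype X]

lemma tv_le_diam (P : I → X → ℝ) (i j : I) : tv (P i) (P j) ≤ diam P :=
  (le_ciSup (f := fun j => tv (P i) (P j)) (Set.finite_range _).bddAbove j).trans
    (le_ciSup (f := fun i => ⨆ j, tv (P i) (P j)) (Set.finite_range _).bddAbove i)

lemma diam_nonneg (P : I → X → ℝ) : 0 ≤ diam P :=
  Real.iSup_nonneg fun _ => Real.iSup_nonneg fun _ => tv_nonneg _ _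

lemma diam_le {P : I → X → ℝ} {a : ℝ} (h : ∀ i j, tv (P i) (P j) ≤ a) (ha : 0 ≤ a) :
    diam P ≤ a :=
  Real.iSup_le (fun i => Real.iSup_le (h i) ha) ha

end diam

lemma sum_mul_le_of_sum_eq_zero {J : Type*} [Fintype J] {v f : J → ℝ} {D : ℝ}
    (hv : ∑ j, v j = 0) (hf : ∀ i j, f i - f j ≤ D) :
    ∑ j, v j * f j ≤ (∑ j, |v j|) * D / 2 := by
  rcases isEmpty_or_nonempty J with _ | _
  · simp
  obtain ⟨jmax, -, hmax⟩ := exists_max_image univ f univ_nonempty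
  obtain ⟨jmin, -, hmin⟩ := exists_min_image univ f univ_nonempty
  set c := (f jmax + f jmin) / 2 with hc
  have hcentre : ∀ j, |f j - c| ≤ D / 2 := fun j => by
    have := hf jmax jmin
    have := hmax j (mem_univ j)
    have := hmin j (mem_univ j)
    rw [abs_le]
    constructor <;> linarith [hc]
  calc ∑ j, v j * f j = ∑ j, v j * (f j - c) := by
        simp only [mul_sub, sum_sub_distrib, ← sum_mul, hv, zero_mul, sub_zero]
    _ ≤ ∑ j, |v j| * (D / 2) := sum_le_sum fun j _ =>
        (le_abs_self _).trans <| (abs_mul _ _).trans_le <|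
          mul_le_mul_of_nonneg_left (hcentre j) (abs_nonneg _)
    _ = (∑ j, |v j|) * D / 2 := by rw [← sum_mul, mul_div_assoc]

lemma exists_mul_eq_abs (x : ℝ) : ∃ s : ℝ, |s| ≤ 1 ∧ s * x = |x| := by
  rcases le_or_gt 0 x with hx | hx
  · exact ⟨1, by simp, by simp [abs_of_nonneg hx]⟩
  · exact ⟨-1, by simp, by simp [abs_of_neg hx]⟩

lemma sum_abs_sum_mul_le {J K : Type*} [Fintype J] [Fintype K] {v : J → ℝ}
    (hv : ∑ j, v j = 0) (Q : J → K → ℝ) :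
    ∑ k, |∑ j, v j * Q j k| ≤ (∑ j, |v j|) * diam Q := by
  choose s hs_le hs_eq using fun k => exists_mul_eq_abs (∑ j, v j * Q j k)
  have hosc : ∀ i j, ∑ k, s k * Q i k - ∑ k, s k * Q j k ≤ 2 * diam Q := fun i j => by
    calc ∑ k, s k * Q i k - ∑ k, s k * Q j k = ∑ k, s k * (Q i k - Q j k) := by
          simp only [mul_sub, sum_sub_distrib]
      _ ≤ ∑ k, |Q i k - Q j k| := sum_le_sum fun k _ =>
          (le_abs_self _).trans <| (abs_mul _ _).trans_le <|
            mul_le_of_le_one_left (abs_nonneg _) (hs_le k)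
      _ = 2 * tv (Q i) (Q j) := by unfold tv; ring
      _ ≤ 2 * diam Q := by linarith [tv_le_diam Q i j]
  calc ∑ k, |∑ j, v j * Q j k| = ∑ j, v j * ∑ k, s k * Q j k := by
        simp only [← hs_eq, mul_sum]
        rw [sum_comm]
        exact sum_congr rfl fun _ _ => sum_congr rfl fun _ _ => by ring
    _ ≤ (∑ j, |v j|) * (2 * diam Q) / 2 := sum_mul_le_of_sum_eq_zero hv hosc
    _ = (∑ j, |v j|) * diam Q := by ring

lemma tv_sum_mul_le {J K : Type*} [Fintype J] [Fintype K] {p q : J → ℝ}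
    (hpq : ∑ j, p j = ∑ j, q j) (Q : J → K → ℝ) :
    tv (fun k => ∑ j, p j * Q j k) (fun k => ∑ j, q j * Q j k) ≤ tv p q * diam Q := by
  have hv : ∑ j, (p j - q j) = 0 := by rw [sum_sub_distrib, hpq, sub_self]
  have h := sum_abs_sum_mul_le hv Q
  simp only [sub_mul, sum_sub_distrib] at h
  unfold tv
  linarith

theorem stmt9_general {I J K : Type*} [Fintype I] [Fintype J] [Fintype K]
    (P : I → J → ℝ) (Q : J → K → ℝ)
    (hP : ∀ i, IsPmf (P i)) :
    diam (fun i k => ∑ j, P i j * Q j k) ≤ diam P * diam Q := by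
  refine diam_le (fun i j => ?_) (mul_nonneg (diam_nonneg P) (diam_nonneg Q))
  calc tv (fun k => ∑ l, P i l * Q l k) (fun k => ∑ l, P j l * Q l k)
      ≤ tv (P i) (P j) * diam Q := tv_sum_mul_le ((hP i).2.trans (hP j).2.symm) Q
    _ ≤ diam P * diam Q := mul_le_mul_of_nonneg_right (tv_le_diam P i j) (diam_nonneg Q)

theorem stmt9 {I J K : Type*} [Fintype I] [Fintype J] [Fintype K]
    (P : I → J → ℝ) (Q : J → K → ℝ)
    (hP : ∀ i, IsPmf (P i)) (hQ : ∀ j, IsPmf (Q j)) :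
    diam (fun i k => ∑ j, P i j * Q j k) ≤ diam P * diam Q :=
  stmt9_general P Q hP
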